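/- Let k be a commutative ring. There exists a functor P from complexes of k-modules to complexes of k-modules together with natural chain maps s : A• → P(A•) (a map of graded sets preserving zero and commuting with differentials, but not necessarily additive) and π : P(A•) → A• (a chain map) such that π ∘ s = id and π is a quasi-isomorphism, where each P(A•) is a complex of projective k-modules. -/

import Mathlib

set_option linter.unusedSectionVars false
set_option maxHeartbeats 1000000
open CategoryTheory

namespace St5

noncomputable local instance (p : Prop) : Decidable p := Classical.propDecidable p

variable {k : Type} [CommRing k]

abbrev Fm (k : Type) [CommRing k] (M : Type) [AddCommGroup M] [Module k M] : Type :=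
  {x : M // x ≠ 0} →₀ k

section Fm
variable {M N L : Type} [AddCommGroup M] [Module k M] [AddCommGroup N] [Module k N]
  [AddCommGroup L] [Module k L]

noncomputable def gen (x : M) : Fm k M :=
  if h : x = 0 then 0 else Finsupp.single ⟨x, h⟩ 1

@[simp] lemma gen_zero : gen (0 : M) = (0 : Fm k M) := by simp [gen]

noncomputable def Fmap (f : M →ₗ[k] N) : Fm k M →ₗ[k] Fm k N :=
  Finsupp.lift _ k _ (fun x => gen (f x))

@[simp] lemma Fmap_gen (f : M →ₗ[k] N) (x : M) : Fmap f (gen x) = gen (f x) := by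
  by_cases h : x = 0
  · simp [h]
  · simp [gen, h, Fmap]

lemma Fm_hom_ext {f g : Fm k M →ₗ[k] N} (h : ∀ x : M, f (gen x) = g (gen x)) :
    f = g := by
  ext ⟨x, hx⟩
  have := h x
  simpa [gen, hx] using this

noncomputable def eps : Fm k M →ₗ[k] M := Finsupp.lift _ k _ (fun x => (x : M))

@[simp] lemma eps_gen (x : M) : eps (gen (k := k) x) = x := by
  by_cases h : x = 0
  · simp [h]
  · simp [gen, h, eps]

end Fm

/-! ### complexes -/

abbrev Cx (k : Type) [CommRing k] := CochainComplex (ModuleCat.{0} k) ℤ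

variable {C D E : Cx k}

noncomputable def FC (C : Cx k) : Cx k :=
  CochainComplex.of (fun n => ModuleCat.of k (Fm k (C.X n)))
    (fun n => ModuleCat.ofHom (Fmap (ConcreteCategory.hom (C := ModuleCat k) (C.d n (n+1))) : Fm k (C.X n) →ₗ[k] Fm k (C.X (n+1))))
    (fun n => by
      apply ModuleCat.hom_ext
      apply Fm_hom_ext (k := k)
      intro x
      show Fmap _ (Fmap _ (gen x)) = (0 : Fm k (C.X (n+1+1)) →ₗ[k] _) 0
      simp only [Fmap_gen, LinearMap.zero_apply, map_zero]
      rw [← ModuleCat.comp_apply, HomologicalComplex.d_comp_d]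
      simp [gen_zero])

@[simp] lemma FC_X (C : Cx k) (n : ℤ) : (FC C).X n = ModuleCat.of k (Fm k (C.X n)) := rfl

@[simp] lemma FC_d (C : Cx k) (n : ℤ) :
    (FC C).d n (n+1) = ModuleCat.ofHom (Fmap (ConcreteCategory.hom (C := ModuleCat k) (C.d n (n+1))) : Fm k (C.X n) →ₗ[k] Fm k (C.X (n+1))) := by
  apply CochainComplex.of_d

noncomputable def FCmap (φ : C ⟶ D) : FC C ⟶ FC D where
  f n := ModuleCat.ofHom (Fmap (ConcreteCategory.hom (C := ModuleCat k) (φ.f n)) : Fm k (C.X n) →ₗ[k] Fm k (D.X n))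
  comm' := by
    rintro i j (rfl : i + 1 = j)
    rw [FC_d, FC_d]
    apply ModuleCat.hom_ext
    apply Fm_hom_ext (k := k)
    intro x
    show Fmap (ConcreteCategory.hom (C := ModuleCat k) (D.d i (i+1))) (Fmap (ConcreteCategory.hom (C := ModuleCat k) (φ.f i)) (gen x)) = Fmap (ConcreteCategory.hom (C := ModuleCat k) (φ.f (i+1))) (Fmap (ConcreteCategory.hom (C := ModuleCat k) (C.d i (i+1))) (gen x))
    simp only [Fmap_gen]
    congr 1
    have := ConcreteCategory.congr_hom (φ.comm i (i+1)) x
    simp only [ModuleCat.comp_apply] at this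
    exact this

noncomputable def epsC (C : Cx k) : FC C ⟶ C where
  f n := ModuleCat.ofHom (eps : Fm k (C.X n) →ₗ[k] C.X n)
  comm' := by
    rintro i j (rfl : i + 1 = j)
    rw [FC_d]
    apply ModuleCat.hom_ext
    apply Fm_hom_ext (k := k)
    intro x
    show C.d i (i+1) (eps (gen x)) = eps (Fmap (ConcreteCategory.hom (C := ModuleCat k) (C.d i (i+1))) (gen x))
    simp

lemma epsC_natural (φ : C ⟶ D) : FCmap φ ≫ epsC D = epsC C ≫ φ := by
  apply HomologicalComplex.hom_ext
  intro n
  apply ModuleCat.hom_ext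
  apply Fm_hom_ext (k := k)
  intro x
  show eps (Fmap (ConcreteCategory.hom (C := ModuleCat k) (φ.f n)) (gen x)) = φ.f n (eps (gen x))
  simp

@[simp] lemma FCmap_id : FCmap (𝟙 C) = 𝟙 (FC C) := by
  apply HomologicalComplex.hom_ext
  intro n
  apply ModuleCat.hom_ext
  apply Fm_hom_ext (k := k)
  intro x
  show Fmap (ConcreteCategory.hom (C := ModuleCat k) ((𝟙 C : C ⟶ C).f n)) (gen x) = gen x
  simp

@[simp] lemma FCmap_comp (φ : C ⟶ D) (ψ : D ⟶ E) :
    FCmap (φ ≫ ψ) = FCmap φ ≫ FCmap ψ := by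
  apply HomologicalComplex.hom_ext
  intro n
  apply ModuleCat.hom_ext
  apply Fm_hom_ext (k := k)
  intro x
  show Fmap (ConcreteCategory.hom (C := ModuleCat k) ((φ ≫ ψ).f n)) (gen x) = Fmap (ConcreteCategory.hom (C := ModuleCat k) (ψ.f n)) (Fmap (ConcreteCategory.hom (C := ModuleCat k) (φ.f n)) (gen x))
  simp

/-! ### shifted kernel complex -/

noncomputable def skC (f : C ⟶ D) : Cx k :=
  CochainComplex.of (fun n => ModuleCat.of k (LinearMap.ker (ConcreteCategory.hom (C := ModuleCat k) (f.f (n+1)))))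
    (fun n => ModuleCat.ofHom <| LinearMap.restrict (ConcreteCategory.hom (C := ModuleCat k) (C.d (n+1) (n+1+1)))
      (fun x hx => by
        have h1 : f.f (n+1+1) (C.d (n+1) (n+1+1) x) = D.d (n+1) (n+1+1) (f.f (n+1) x) := by
          have := ConcreteCategory.congr_hom (f.comm (n+1) (n+1+1)) x
          simp only [ModuleCat.comp_apply] at this
          exact this.symm
        simp only [LinearMap.mem_ker] at hx ⊢
        rw [h1, hx, map_zero]))
    (fun n => by
      apply ModuleCat.hom_ext
      refine LinearMap.ext fun x => ?_
      have : C.d (n+1) (n+1+1) ≫ C.d (n+1+1) (n+1+1+1) = 0 := HomologicalComplex.d_comp_d _ _ _ _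
      exact Subtype.ext (ConcreteCategory.congr_hom this x.1))

@[simp] lemma skC_X (f : C ⟶ D) (n : ℤ) :
    (skC f).X n = ModuleCat.of k (LinearMap.ker (ConcreteCategory.hom (C := ModuleCat k) (f.f (n+1)))) := rfl

@[simp] lemma skC_d (f : C ⟶ D) (n : ℤ) :
    (skC f).d n (n+1) = ModuleCat.ofHom (LinearMap.restrict (ConcreteCategory.hom (C := ModuleCat k) (C.d (n+1) (n+1+1))) (fun x hx => by
        have h1 : f.f (n+1+1) (C.d (n+1) (n+1+1) x) = D.d (n+1) (n+1+1) (f.f (n+1) x) := by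
          have := ConcreteCategory.congr_hom (f.comm (n+1) (n+1+1)) x
          simp only [ModuleCat.comp_apply] at this
          exact this.symm
        simp only [LinearMap.mem_ker] at hx ⊢
        rw [h1, hx, map_zero])) := by
  apply CochainComplex.of_d

/-! ### the tower -/

variable (k) in
noncomputable def Kt (A : Cx k) : ℕ → Cx k
  | 0 => A
  | (i+1) => skC (epsC (Kt A i))

variable (k) in
noncomputable abbrev Pt (A : Cx k) (i : ℕ) : Cx k := FC (Kt k A i)

variable (k) in
noncomputable abbrev ep (A : Cx k) (i : ℕ) : Pt k A i ⟶ Kt k A i := epsC (Kt k A i)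

/-- inclusion of the (i+1)-st kernel level into level i, raising degree by one -/
noncomputable def vincl (A : Cx k) (i : ℕ) (n : ℤ) :
    (Kt k A (i+1)).X n →ₗ[k] (Pt k A i).X (n+1) :=
  Submodule.subtype (LinearMap.ker (ConcreteCategory.hom (C := ModuleCat k) ((ep k A i).f (n+1))))

lemma vincl_injective (A : Cx k) (i : ℕ) (n : ℤ) : Function.Injective (vincl A i n) :=
  Subtype.val_injective

@[simp] lemma ep_vincl (A : Cx k) (i : ℕ) (n : ℤ) (x : (Kt k A (i+1)).X n) :
    (ep k A i).f (n+1) (vincl A i n x) = 0 := x.2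

lemma vincl_d (A : Cx k) (i : ℕ) (n : ℤ) (x : (Kt k A (i+1)).X n) :
    vincl A i (n+1) ((Kt k A (i+1)).d n (n+1) x) = (Pt k A i).d (n+1) (n+1+1) (vincl A i n x) := by
  show (Submodule.subtype (LinearMap.ker (ConcreteCategory.hom (C := ModuleCat k) ((ep k A i).f (n+1+1))))) (((skC (epsC (Kt k A i))).d n (n+1)) x) = _
  rw [skC_d]
  rfl

/-- the vertical component of the total differential -/
noncomputable def vcomp (A : Cx k) (i : ℕ) (n : ℤ) :
    (Pt k A (i+1)).X n →ₗ[k] (Pt k A i).X (n+1) :=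
  vincl A i n ∘ₗ (ConcreteCategory.hom (C := ModuleCat k) ((ep k A (i+1)).f n) : (Pt k A (i+1)).X n →ₗ[k] (Kt k A (i+1)).X n)

@[simp] lemma ep_vcomp (A : Cx k) (i : ℕ) (n : ℤ) (x : (Pt k A (i+1)).X n) :
    (ep k A i).f (n+1) (vcomp A i n x) = 0 := by
  simp only [vcomp, LinearMap.comp_apply]
  exact ep_vincl _ _ _ _

lemma vcomp_gen (A : Cx k) (i : ℕ) (n : ℤ) (x : (Kt k A (i+1)).X n) :
    vcomp A i n (gen x) = vincl A i n x := by
  simp only [vcomp, LinearMap.comp_apply]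
  refine congrArg (vincl A i n) ?_
  exact eps_gen (k := k) x

lemma vcomp_d (A : Cx k) (i : ℕ) (n : ℤ) (x : (Pt k A (i+1)).X n) :
    vcomp A i (n+1) ((Pt k A (i+1)).d n (n+1) x) =
      (Pt k A i).d (n+1) (n+1+1) (vcomp A i n x) := by
  simp only [vcomp, LinearMap.comp_apply]
  have h : (ep k A (i+1)).f (n+1) ((Pt k A (i+1)).d n (n+1) x) =
      (Kt k A (i+1)).d n (n+1) ((ep k A (i+1)).f n x) := by
    have := ConcreteCategory.congr_hom ((ep k A (i+1)).comm n (n+1)) x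
    simp only [ModuleCat.comp_apply] at this
    exact this.symm
  rw [h, vincl_d]

lemma vcomp_vcomp (A : Cx k) (i : ℕ) (n : ℤ) (x : (Pt k A (i+2)).X n) :
    vcomp A i (n+1) (vcomp A (i+1) n x) = 0 := by
  simp only [vcomp, LinearMap.comp_apply]
  have : (ep k A (i+1)).f (n+1) (vincl A (i+1) n ((ep k A (i+2)).f n x)) = 0 := ep_vincl _ _ _ _
  rw [this]
  exact map_zero (vincl A i (n+1))

/-! ### the total complex -/

variable (k) in
abbrev TotX (A : Cx k) (n : ℤ) : Type := Π₀ (i : ℕ), ((Pt k A i).X n)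

/-- the part of the total differential coming from the vertical maps, from index `j` -/
noncomputable def vpartFun (A : Cx k) (n : ℤ) : ∀ j : ℕ, (Pt k A j).X n →ₗ[k] TotX k A (n+1)
  | 0 => 0
  | (j+1) => DFinsupp.lsingle j ∘ₗ vcomp A j n

noncomputable def dTot (A : Cx k) (n : ℤ) : TotX k A n →ₗ[k] TotX k A (n+1) :=
  DFinsupp.lsum ℕ (fun i =>
    (((-1 : k)^i) • (DFinsupp.lsingle i ∘ₗ (ConcreteCategory.hom (C := ModuleCat k) ((Pt k A i).d n (n+1)) :
        (Pt k A i).X n →ₗ[k] (Pt k A i).X (n+1)))) + vpartFun A n i)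

lemma vpartFun_apply_ne (A : Cx k) (n : ℤ) (j i : ℕ) (h : j ≠ i + 1) (x : (Pt k A j).X n) :
    (vpartFun A n j x) i = 0 := by
  cases j with
  | zero => simp only [vpartFun, LinearMap.zero_apply, DFinsupp.zero_apply]
  | succ m =>
    rw [vpartFun, LinearMap.comp_apply, DFinsupp.lsingle_apply,
      DFinsupp.single_eq_of_ne (fun hmi => h (by omega))]

lemma vpartFun_apply_succ (A : Cx k) (n : ℤ) (i : ℕ) (x : (Pt k A (i+1)).X n) :
    (vpartFun A n (i+1) x) i = vcomp A i n x := by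
  rw [vpartFun, LinearMap.comp_apply, DFinsupp.lsingle_apply, DFinsupp.single_eq_same]

lemma dTot_single (A : Cx k) (n : ℤ) (j : ℕ) (x : (Pt k A j).X n) (i : ℕ) :
    dTot A n (DFinsupp.single j x) i =
      ((-1 : k)^i) • ((Pt k A i).d n (n+1) ((DFinsupp.single j x : TotX k A n) i)) +
        vcomp A i n ((DFinsupp.single j x : TotX k A n) (i+1)) := by
  rw [dTot, DFinsupp.lsum_single, LinearMap.add_apply, DFinsupp.add_apply,
    LinearMap.smul_apply, DFinsupp.smul_apply, LinearMap.comp_apply, DFinsupp.lsingle_apply]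
  rcases eq_or_ne j i with rfl | hji
  · simp only [DFinsupp.single_eq_same, DFinsupp.single_eq_of_ne (show j + 1 ≠ j by omega),
      map_zero, add_zero, vpartFun_apply_ne A n j j (show j ≠ j + 1 by omega), smul_zero]
  · rcases eq_or_ne j (i+1) with rfl | hji1
    · simp only [DFinsupp.single_eq_of_ne hji.symm, DFinsupp.single_eq_same, map_zero, smul_zero,
        zero_add, vpartFun_apply_succ]
    · simp only [DFinsupp.single_eq_of_ne hji.symm, DFinsupp.single_eq_of_ne hji1.symm, map_zero,
        smul_zero, zero_add, vpartFun_apply_ne A n j i hji1]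

lemma dTot_apply (A : Cx k) (n : ℤ) (t : TotX k A n) (i : ℕ) :
    dTot A n t i = ((-1 : k)^i) • ((Pt k A i).d n (n+1) (t i)) + vcomp A i n (t (i+1)) := by
  induction t using DFinsupp.induction with
  | h0 => simp only [map_zero, DFinsupp.zero_apply, smul_zero, add_zero, zero_add]
  | ha j x t hjt hx ih =>
    simp only [map_add, DFinsupp.add_apply, ih, dTot_single, smul_add]
    abel

lemma dTot_dTot (A : Cx k) (n : ℤ) (t : TotX k A n) :
    dTot A (n+1) (dTot A n t) = 0 := by
  ext i
  rw [dTot_apply, dTot_apply, dTot_apply]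
  have hdd : ∀ (x : (Pt k A i).X n), (Pt k A i).d (n+1) (n+1+1) ((Pt k A i).d n (n+1) x) = 0 := by
    intro x
    have := ConcreteCategory.congr_hom
      ((Pt k A i).d_comp_d n (n+1) (n+1+1) : _ ≫ _ = (0 : _ ⟶ _)) x
    exact this
  have h2 : vcomp A i (n+1) ((Pt k A (i+1)).d n (n+1) (t (i+1))) =
      (Pt k A i).d (n+1) (n+1+1) (vcomp A i n (t (i+1))) := vcomp_d A i n (t (i+1))
  simp only [map_add, map_smul, smul_add, hdd, smul_zero, zero_add, add_zero,
    vcomp_vcomp, h2, smul_smul]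
  rw [pow_succ, mul_neg_one, neg_smul, add_neg_cancel]
  exact (DFinsupp.zero_apply (β := fun j => ((Pt k A j).X (n+1+1) : Type)) i).symm

variable (k) in
noncomputable def TotC (A : Cx k) : Cx k :=
  CochainComplex.of (fun n => ModuleCat.of k (TotX k A n))
    (fun n => ModuleCat.ofHom (dTot A n))
    (fun n => by
      apply ModuleCat.hom_ext
      refine LinearMap.ext fun t => ?_
      exact dTot_dTot A n t)

@[simp] lemma TotC_X (A : Cx k) (n : ℤ) : (TotC k A).X n = ModuleCat.of k (TotX k A n) := rfl

@[simp] lemma TotC_d (A : Cx k) (n : ℤ) :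
    (TotC k A).d n (n+1) = ModuleCat.ofHom (dTot A n : TotX k A n →ₗ[k] TotX k A (n+1)) := by
  apply CochainComplex.of_d

/-! ### the projection and the set-section -/

lemma epsC_natural_apply {C D : Cx k} (φ : C ⟶ D) (n : ℤ) (x : (FC C).X n) :
    (epsC D).f n ((FCmap φ).f n x) = φ.f n ((epsC C).f n x) := by
  have h := congrArg (fun ψ : FC C ⟶ D => ψ.f n) (epsC_natural φ)
  simp only [HomologicalComplex.comp_f] at h
  exact ConcreteCategory.congr_hom h x

lemma hom_comm_apply {C D : Cx k} (φ : C ⟶ D) (i j : ℤ) (x : C.X i) :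
    D.d i j (φ.f i x) = φ.f j (C.d i j x) := by
  have := ConcreteCategory.congr_hom (φ.comm i j) x
  simp only [ModuleCat.comp_apply] at this
  exact this

noncomputable def piTot (A : Cx k) : TotC k A ⟶ A where
  f n := ModuleCat.ofHom <| (ConcreteCategory.hom (C := ModuleCat k) ((ep k A 0).f n) : (Pt k A 0).X n →ₗ[k] A.X n) ∘ₗ
    (DFinsupp.lapply 0 : TotX k A n →ₗ[k] (Pt k A 0).X n)
  comm' := by
    rintro i j (rfl : i + 1 = j)
    rw [TotC_d]
    apply ModuleCat.hom_ext
    refine LinearMap.ext fun (t : TotX k A i) => ?_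
    show A.d i (i+1) ((ep k A 0).f i (t 0)) = (ep k A 0).f (i+1) (dTot A i t 0)
    rw [dTot_apply, map_add, ep_vcomp, add_zero, pow_zero, one_smul]
    exact hom_comm_apply (ep k A 0) i (i+1) (t 0)

noncomputable def sTot (A : Cx k) (n : ℤ) (a : A.X n) : TotX k A n :=
  DFinsupp.single (β := fun i => (Pt k A i).X n) 0 (gen a : Fm k (A.X n))

@[simp] lemma sTot_zero (A : Cx k) (n : ℤ) : sTot A n 0 = 0 := by
  erw [sTot, gen_zero, DFinsupp.single_zero]

@[simp] lemma piTot_sTot (A : Cx k) (n : ℤ) (a : A.X n) :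
    (piTot A).f n (sTot A n a) = a := by
  show (ep k A 0).f n ((sTot A n a) 0) = a
  erw [sTot, DFinsupp.single_eq_same]
  exact eps_gen a

lemma piTot_apply (A : Cx k) (n : ℤ) (t : TotX k A n) :
    (piTot A).f n t = (ep k A 0).f n (t 0) := rfl

lemma dTot_sTot (A : Cx k) (n : ℤ) (a : A.X n) :
    dTot A n (sTot A n a) = sTot A (n+1) (A.d n (n+1) a) := by
  ext i
  erw [sTot, dTot_single]
  cases i with
  | zero =>
    erw [DFinsupp.single_eq_same, DFinsupp.single_eq_of_ne (by omega), map_zero, add_zero,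
      pow_zero, one_smul, sTot, DFinsupp.single_eq_same, FC_d]
    show Fmap (ConcreteCategory.hom (C := ModuleCat k) ((Kt k A 0).d n (n+1))) (gen a) = gen (A.d n (n+1) a)
    exact Fmap_gen _ a
  | succ m =>
    erw [DFinsupp.single_eq_of_ne (by omega), DFinsupp.single_eq_of_ne (by omega), map_zero,
      smul_zero, zero_add, map_zero]

/-! ### functoriality -/

variable {A B E' : Cx k}

noncomputable def skCmap {C C' D D' : Cx k} (f : C ⟶ D) (f' : C' ⟶ D')
    (a : C ⟶ C') (b : D ⟶ D') (h : ∀ (n : ℤ) (x : C.X n), f'.f n (a.f n x) = b.f n (f.f n x)) :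
    skC f ⟶ skC f' where
  f n := ModuleCat.ofHom <| LinearMap.restrict (ConcreteCategory.hom (C := ModuleCat k) (a.f (n+1))) (p := LinearMap.ker (ConcreteCategory.hom (C := ModuleCat k) (f.f (n+1))))
    (q := LinearMap.ker (ConcreteCategory.hom (C := ModuleCat k) (f'.f (n+1)))) (fun x hx => by
      simp only [LinearMap.mem_ker] at hx ⊢
      rw [h, hx, map_zero])
  comm' := by
    rintro i j (rfl : i + 1 = j)
    rw [skC_d, skC_d]
    apply ModuleCat.hom_ext
    refine LinearMap.ext fun x => ?_
    refine Subtype.ext ?_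
    show C'.d (i+1) (i+1+1) (a.f (i+1) x.1) = a.f (i+1+1) (C.d (i+1) (i+1+1) x.1)
    exact hom_comm_apply a (i+1) (i+1+1) x.1

noncomputable def Kmap (φ : A ⟶ B) : ∀ i : ℕ, Kt k A i ⟶ Kt k B i
  | 0 => φ
  | (i+1) => skCmap (epsC (Kt k A i)) (epsC (Kt k B i)) (FCmap (Kmap φ i)) (Kmap φ i)
      (fun n x => epsC_natural_apply (Kmap φ i) n x)

noncomputable abbrev Pmap (φ : A ⟶ B) (i : ℕ) : Pt k A i ⟶ Pt k B i := FCmap (Kmap φ i)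

lemma Kmap_succ_f_val (φ : A ⟶ B) (i : ℕ) (n : ℤ) (x : (Kt k A (i+1)).X n) :
    vincl B i n ((Kmap φ (i+1)).f n x) = (Pmap φ i).f (n+1) (vincl A i n x) := rfl

lemma vcomp_nat (φ : A ⟶ B) (i : ℕ) (n : ℤ) (x : (Pt k A (i+1)).X n) :
    (Pmap φ i).f (n+1) (vcomp A i n x) = vcomp B i n ((Pmap φ (i+1)).f n x) := by
  rw [vcomp, LinearMap.comp_apply, ← Kmap_succ_f_val]
  rw [vcomp, LinearMap.comp_apply]
  congr 1
  exact (epsC_natural_apply (Kmap φ (i+1)) n x).symm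

noncomputable def TotmapF (φ : A ⟶ B) (n : ℤ) : TotX k A n →ₗ[k] TotX k B n :=
  DFinsupp.mapRange.linearMap
    (fun i => (ConcreteCategory.hom (C := ModuleCat k) ((Pmap φ i).f n) : (Pt k A i).X n →ₗ[k] (Pt k B i).X n))

lemma TotmapF_apply (φ : A ⟶ B) (n : ℤ) (t : TotX k A n) (l : ℕ) :
    TotmapF φ n t l = (Pmap φ l).f n (t l) := by
  rw [TotmapF, DFinsupp.mapRange.linearMap_apply, DFinsupp.mapRange_apply]

noncomputable def Totmap (φ : A ⟶ B) : TotC k A ⟶ TotC k B where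
  f n := ModuleCat.ofHom (TotmapF φ n)
  comm' := by
    rintro i j (rfl : i + 1 = j)
    rw [TotC_d, TotC_d]
    apply ModuleCat.hom_ext
    refine LinearMap.ext fun (t : TotX k A i) => ?_
    show dTot B i (TotmapF φ i t) = TotmapF φ (i+1) (dTot A i t)
    refine DFinsupp.ext fun l => ?_
    rw [dTot_apply, TotmapF_apply, TotmapF_apply, TotmapF_apply, dTot_apply,
      map_add, map_smul, vcomp_nat]
    congr 2
    exact hom_comm_apply (Pmap φ l) i (i+1) (t l)

lemma Totmap_apply (φ : A ⟶ B) (n : ℤ) (t : TotX k A n) :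
    (Totmap φ).f n t = TotmapF φ n t := rfl

lemma Kmap_id (A : Cx k) : ∀ i, Kmap (𝟙 A) i = 𝟙 (Kt k A i)
  | 0 => rfl
  | (i+1) => by
    apply HomologicalComplex.hom_ext
    intro n
    apply ModuleCat.hom_ext
    refine LinearMap.ext fun x => ?_
    refine Subtype.ext ?_
    show (FCmap (Kmap (𝟙 A) i)).f (n+1) x.1 = x.1
    rw [Kmap_id A i, FCmap_id]
    rfl

lemma Kmap_comp (φ : A ⟶ B) (ψ : B ⟶ E') : ∀ i, Kmap (φ ≫ ψ) i = Kmap φ i ≫ Kmap ψ i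
  | 0 => rfl
  | (i+1) => by
    apply HomologicalComplex.hom_ext
    intro n
    apply ModuleCat.hom_ext
    refine LinearMap.ext fun x => ?_
    refine Subtype.ext ?_
    show (FCmap (Kmap (φ ≫ ψ) i)).f (n+1) x.1 = _
    rw [Kmap_comp φ ψ i, FCmap_comp]
    rfl

lemma Pmap_id (A : Cx k) (l : ℕ) : Pmap (𝟙 A) l = 𝟙 (Pt k A l) := by
  show FCmap (Kmap (𝟙 A) l) = _
  rw [Kmap_id A l, FCmap_id]

lemma Pmap_comp (φ : A ⟶ B) (ψ : B ⟶ E') (l : ℕ) :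
    Pmap (φ ≫ ψ) l = Pmap φ l ≫ Pmap ψ l := by
  show FCmap (Kmap (φ ≫ ψ) l) = _
  rw [Kmap_comp φ ψ l, FCmap_comp]

lemma Totmap_id (A : Cx k) : Totmap (𝟙 A) = 𝟙 (TotC k A) := by
  apply HomologicalComplex.hom_ext
  intro n
  apply ModuleCat.hom_ext
  refine LinearMap.ext fun (t : TotX k A n) => ?_
  show TotmapF (𝟙 A) n t = t
  refine DFinsupp.ext fun l => ?_
  rw [TotmapF_apply]
  have := ConcreteCategory.congr_hom
    (congrArg (fun (ψ : Pt k A l ⟶ Pt k A l) => ψ.f n) (Pmap_id A l)) (t l)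
  exact this

lemma Totmap_comp (φ : A ⟶ B) (ψ : B ⟶ E') :
    Totmap (φ ≫ ψ) = Totmap φ ≫ Totmap ψ := by
  apply HomologicalComplex.hom_ext
  intro n
  apply ModuleCat.hom_ext
  refine LinearMap.ext fun (t : TotX k A n) => ?_
  show TotmapF (φ ≫ ψ) n t = TotmapF ψ n (TotmapF φ n t)
  refine DFinsupp.ext fun l => ?_
  rw [TotmapF_apply, TotmapF_apply, TotmapF_apply]
  have := ConcreteCategory.congr_hom
    (congrArg (fun (ρ : Pt k A l ⟶ Pt k E' l) => ρ.f n) (Pmap_comp φ ψ l)) (t l)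
  rw [this]
  rfl

variable (k) in
noncomputable def Pfun : Cx k ⥤ Cx k where
  obj A := TotC k A
  map φ := Totmap φ
  map_id A := Totmap_id A
  map_comp φ ψ := Totmap_comp φ ψ

variable (k) in
noncomputable def piNat : Pfun k ⟶ 𝟭 (Cx k) where
  app A := piTot A
  naturality A B φ := by
    apply HomologicalComplex.hom_ext
    intro n
    apply ModuleCat.hom_ext
    refine LinearMap.ext fun (t : TotX k A n) => ?_
    show (ep k B 0).f n ((TotmapF φ n t) 0) = φ.f n ((ep k A 0).f n (t 0))
    rw [TotmapF_apply]
    exact epsC_natural_apply (Kmap φ 0) n (t 0)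

lemma sTot_nat (φ : A ⟶ B) (n : ℤ) (a : A.X n) :
    (Totmap φ).f n (sTot A n a) = sTot B n (φ.f n a) := by
  erw [Totmap_apply, sTot, TotmapF, DFinsupp.mapRange.linearMap_apply, DFinsupp.mapRange_single,
    sTot]
  congr 1
  show Fmap (ConcreteCategory.hom (C := ModuleCat k) (φ.f n)) (gen a) = gen (φ.f n a)
  exact Fmap_gen _ a

/-! ### the chase: cycles in the kernel of `piTot` are boundaries -/

lemma dd_zero (C : Cx k) (a b c : ℤ) (x : C.X a) : C.d b c (C.d a b x) = 0 :=
  ConcreteCategory.congr_hom (C.d_comp_d a b c : _ ≫ _ = (0 : _ ⟶ _)) x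

section Chase

variable (A : Cx k) (m : ℤ) (t : TotX k A (m+1))

lemma vincl_ep (i : ℕ) (n : ℤ) (u : (Pt k A (i+1)).X n) :
    vincl A i n ((ep k A (i+1)).f n u) = vcomp A i n u := rfl

lemma hd_index (hd : dTot A (m+1) t = 0) (i : ℕ) :
    vcomp A i (m+1) (t (i+1)) = -(((-1:k)^i) • (Pt k A i).d (m+1) (m+1+1) (t i)) := by
  have h := congrArg (fun u : TotX k A (m+1+1) => u i) hd
  rw [dTot_apply] at h
  have h0 : (0 : TotX k A (m+1+1)) i = 0 := rfl
  rw [h0] at h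
  exact eq_neg_of_add_eq_zero_right h

variable (hd : dTot A (m+1) t = 0) (hz : (ep k A 0).f (m+1) (t 0) = 0)

set_option linter.unusedVariables false in
/-- recursively constructed bounding element, with the invariant needed to continue -/
noncomputable def chaseW (hd : dTot A (m+1) t = 0) (hz : (ep k A 0).f (m+1) (t 0) = 0) :
    ∀ i : ℕ,
    {y : (Pt k A i).X m //
      (ep k A i).f (m+1) (t i - ((-1:k)^i) • (Pt k A i).d m (m+1) y) = 0}
  | 0 => ⟨0, by rw [map_zero, smul_zero, sub_zero]; exact hz⟩
  | (i+1) => by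
    refine ⟨gen (⟨t i - ((-1:k)^i) • (Pt k A i).d m (m+1) (chaseW hd hz i).1,
      LinearMap.mem_ker.mpr (chaseW hd hz i).2⟩ : (Kt k A (i+1)).X m), ?_⟩
    apply vincl_injective A i (m+1)
    erw [map_zero, vincl_ep, map_sub, map_smul, hd_index A m t hd i, vcomp_d, vcomp_gen]
    have hval : (vincl A i m (⟨t i - ((-1:k)^i) • (Pt k A i).d m (m+1) (chaseW hd hz i).1,
        LinearMap.mem_ker.mpr (chaseW hd hz i).2⟩ : (Kt k A (i+1)).X m)
          : (Pt k A i).X (m+1))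
        = t i - ((-1:k)^i) • (Pt k A i).d m (m+1) (chaseW hd hz i).1 := rfl
    rw [hval, map_sub, map_smul]
    rw [dd_zero, smul_zero, sub_zero, pow_succ, mul_neg_one, neg_smul, sub_neg_eq_add,
      neg_add_cancel]

/-- the value of `chaseW` at a successor -/
noncomputable def chaseZ (i : ℕ) : (Kt k A (i+1)).X m :=
  ⟨t i - ((-1:k)^i) • (Pt k A i).d m (m+1) (chaseW A m t hd hz i).1,
    LinearMap.mem_ker.mpr (chaseW A m t hd hz i).2⟩

lemma chaseW_succ (i : ℕ) :
    (chaseW A m t hd hz (i+1)).1 = gen (chaseZ A m t hd hz i) := rfl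

lemma chase_step (i : ℕ) :
    ((-1:k)^i) • (Pt k A i).d m (m+1) ((chaseW A m t hd hz i).1) +
      vcomp A i m ((chaseW A m t hd hz (i+1)).1) = t i := by
  rw [chaseW_succ, vcomp_gen]
  have : (vincl A i m (chaseZ A m t hd hz i) : (Pt k A i).X (m+1))
      = t i - ((-1:k)^i) • (Pt k A i).d m (m+1) (chaseW A m t hd hz i).1 := rfl
  rw [this]
  abel

lemma chase_vanish (i : ℕ) (h1 : t i = 0) (h2 : t (i+1) = 0) :
    (chaseW A m t hd hz (i+2)).1 = 0 := by
  rw [chaseW_succ]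
  have hzval : chaseZ A m t hd hz (i+1) = 0 := by
    apply Subtype.ext
    show t (i+1) - ((-1:k)^(i+1)) • (Pt k A (i+1)).d m (m+1) (chaseW A m t hd hz (i+1)).1
      = 0
    rw [chaseW_succ]
    have hPd : (Pt k A (i+1)).d m (m+1) (gen (chaseZ A m t hd hz i))
        = gen ((Kt k A (i+1)).d m (m+1) (chaseZ A m t hd hz i)) := by
      rw [FC_d]
      exact Fmap_gen _ _
    rw [hPd]
    have hdz : (Kt k A (i+1)).d m (m+1) (chaseZ A m t hd hz i) = 0 := by
      apply vincl_injective A i (m+1)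
      rw [map_zero, vincl_d]
      have : (vincl A i m (chaseZ A m t hd hz i) : (Pt k A i).X (m+1))
          = t i - ((-1:k)^i) • (Pt k A i).d m (m+1) (chaseW A m t hd hz i).1 := rfl
      rw [this, map_sub, map_smul, dd_zero, smul_zero, sub_zero, h1, map_zero]
    rw [hdz, gen_zero]
    show t (i+1) - ((-1:k)^(i+1)) • (0 : (Pt k A (i+1)).X (m+1)) = 0
    rw [smul_zero, sub_zero]
    exact h2
  rw [hzval, gen_zero]
  rfl

lemma chase_exists (hd : dTot A (m+1) t = 0) (hz : (ep k A 0).f (m+1) (t 0) = 0) :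
    ∃ y : TotX k A m, dTot A m y = t := by
  classical
  set N : ℕ := (t.support.sup id) + 1 with hN
  have htN : ∀ i, N ≤ i → t i = 0 := by
    intro i hi
    by_contra hne
    have h1 : i ∈ t.support := DFinsupp.mem_support_iff.mpr hne
    have h2 := Finset.le_sup (f := id) h1
    simp only [id_eq] at h2
    omega
  have hWvanish : ∀ i, N + 2 ≤ i → (chaseW A m t hd hz i).1 = 0 := by
    intro i hi
    obtain ⟨j, rfl⟩ : ∃ j, i = j + 2 := ⟨i - 2, by omega⟩
    exact chase_vanish A m t hd hz j (htN j (by omega)) (htN (j+1) (by omega))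
  refine ⟨DFinsupp.mk (Finset.range (N+2)) (fun i => (chaseW A m t hd hz i.1).1), ?_⟩
  have hy : ∀ i, (DFinsupp.mk (Finset.range (N+2))
      (fun i => (chaseW A m t hd hz i.1).1) : TotX k A m) i = (chaseW A m t hd hz i).1 := by
    intro i
    rw [DFinsupp.mk_apply]
    split_ifs with h
    · rfl
    · exact (hWvanish i (by simpa using h)).symm
  ext i
  rw [dTot_apply, hy, hy]
  exact chase_step A m t hd hz i

end Chase

/-! ### a concrete criterion for quasi-isomorphisms in `ModuleCat` -/

section QIso

lemma mcomp_apply {M N P : ModuleCat.{0} k} (f : M ⟶ N) (g : N ⟶ P) (x : M) :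
    (f ≫ g) x = g (f x) := rfl

open ShortComplex in
lemma homologyπ_eq_zero_iff (S : ShortComplex (ModuleCat.{0} k)) (c : S.cycles) :
    S.homologyπ c = 0 ↔ ∃ a : S.X₁, S.f a = S.iCycles c := by
  have hπ := ConcreteCategory.congr_hom (S.π_moduleCatCyclesIso_hom :
    S.homologyπ ≫ S.moduleCatHomologyIso.hom = _) c
  simp only [ModuleCat.comp_apply] at hπ
  constructor
  · intro h
    rw [h, map_zero] at hπ
    have hmem : S.moduleCatCyclesIso.hom c ∈ LinearMap.range S.moduleCatToCycles := by
      erw [← Submodule.Quotient.mk_eq_zero, ← Submodule.mkQ_apply]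
      exact hπ.symm
    obtain ⟨a, ha⟩ := hmem
    refine ⟨a, ?_⟩
    have h1 : (S.moduleCatToCycles a : S.X₂) = S.f a := rfl
    have h2 := congrArg (fun u : LinearMap.ker S.g.hom => (u : S.X₂)) ha
    simp only at h2
    rw [h1] at h2
    rw [h2]
    exact ConcreteCategory.congr_hom
      (S.moduleCatCyclesIso_hom_i : S.moduleCatCyclesIso.hom ≫ _ = S.iCycles) c
  · rintro ⟨a, ha⟩
    have hc : c = S.toCycles a := by
      have hmono : Function.Injective S.iCycles :=
        (ModuleCat.mono_iff_injective S.iCycles).mp inferInstance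
      apply hmono
      have := ConcreteCategory.congr_hom (S.toCycles_i : S.toCycles ≫ S.iCycles = S.f) a
      simp only [ModuleCat.comp_apply] at this
      rw [this, ha]
    rw [hc]
    have := ConcreteCategory.congr_hom (S.toCycles_comp_homologyπ : S.toCycles ≫ S.homologyπ = 0) a
    simp only [ModuleCat.comp_apply] at this
    exact this

open ShortComplex in
lemma isIso_homologyMap_of {S1 S2 : ShortComplex (ModuleCat.{0} k)} (φ : S1 ⟶ S2)
    (hsurj : ∀ y : S2.X₂, S2.g y = 0 → ∃ x : S1.X₂, S1.g x = 0 ∧ φ.τ₂ x = y)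
    (hinj : ∀ x : S1.X₂, S1.g x = 0 → (∃ b : S2.X₁, S2.f b = φ.τ₂ x) →
      ∃ a : S1.X₁, S1.f a = x) :
    IsIso (ShortComplex.homologyMap φ) := by
  have hπsurj1 : Function.Surjective S1.homologyπ :=
    (ModuleCat.epi_iff_surjective S1.homologyπ).mp inferInstance
  have hπsurj2 : Function.Surjective S2.homologyπ :=
    (ModuleCat.epi_iff_surjective S2.homologyπ).mp inferInstance
  have hicyc1 : Function.Injective S1.iCycles :=
    (ModuleCat.mono_iff_injective S1.iCycles).mp inferInstance
  have hicyc2 : Function.Injective S2.iCycles :=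
    (ModuleCat.mono_iff_injective S2.iCycles).mp inferInstance
  have hnat : ∀ c : S1.cycles,
      ShortComplex.homologyMap φ (S1.homologyπ c) = S2.homologyπ (cyclesMap φ c) := by
    intro c
    have := ConcreteCategory.congr_hom (ShortComplex.homologyπ_naturality φ) c
    simp only [ModuleCat.comp_apply] at this
    exact this
  have hcyc_i : ∀ c : S1.cycles, S2.iCycles (cyclesMap φ c) = φ.τ₂ (S1.iCycles c) := by
    intro c
    have := ConcreteCategory.congr_hom (cyclesMap_i φ) c
    simp only [ModuleCat.comp_apply] at this
    exact this
  have hg1 : ∀ c : S1.cycles, S1.g (S1.iCycles c) = 0 := by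
    intro c
    have := ConcreteCategory.congr_hom (S1.iCycles_g : S1.iCycles ≫ S1.g = 0) c
    simp only [ModuleCat.comp_apply] at this
    exact this
  have hg2 : ∀ c : S2.cycles, S2.g (S2.iCycles c) = 0 := by
    intro c
    have := ConcreteCategory.congr_hom (S2.iCycles_g : S2.iCycles ≫ S2.g = 0) c
    simp only [ModuleCat.comp_apply] at this
    exact this
  have : Balanced (ModuleCat.{0} k) := inferInstance
  have hmono : Mono (ShortComplex.homologyMap φ) := by
    rw [ModuleCat.mono_iff_injective]
    rw [injective_iff_map_eq_zero]
    intro h hmap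
    obtain ⟨c, rfl⟩ := hπsurj1 h
    rw [hnat] at hmap
    obtain ⟨b, hb⟩ := (homologyπ_eq_zero_iff S2 (cyclesMap φ c)).mp hmap
    rw [hcyc_i] at hb
    obtain ⟨a, ha⟩ := hinj (S1.iCycles c) (hg1 c) ⟨b, hb⟩
    exact (homologyπ_eq_zero_iff S1 c).mpr ⟨a, ha⟩
  have hepi : Epi (ShortComplex.homologyMap φ) := by
    rw [ModuleCat.epi_iff_surjective]
    intro h
    obtain ⟨c2, rfl⟩ := hπsurj2 h
    obtain ⟨x, hx, hφx⟩ := hsurj (S2.iCycles c2) (hg2 c2)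
    let c1 : S1.cycles := S1.moduleCatCyclesIso.inv ⟨x, LinearMap.mem_ker.mpr hx⟩
    have hic1 : S1.iCycles c1 = x := by
      have := ConcreteCategory.congr_hom (S1.moduleCatCyclesIso_inv_iCycles :
        S1.moduleCatCyclesIso.inv ≫ S1.iCycles = _) ⟨x, LinearMap.mem_ker.mpr hx⟩
      exact this
    refine ⟨S1.homologyπ c1, ?_⟩
    rw [hnat]
    congr 1
    apply hicyc2
    rw [hcyc_i, hic1, hφx]
  exact isIso_of_mono_of_epi _

lemma quasiIsoAt_of_concrete {K L : Cx k} (φ : K ⟶ L) (i : ℤ)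
    (hsurj : ∀ y : L.X i, L.d i ((ComplexShape.up ℤ).next i) y = 0 →
      ∃ x : K.X i, K.d i ((ComplexShape.up ℤ).next i) x = 0 ∧ φ.f i x = y)
    (hinj : ∀ x : K.X i, K.d i ((ComplexShape.up ℤ).next i) x = 0 →
      (∃ b : L.X ((ComplexShape.up ℤ).prev i), L.d ((ComplexShape.up ℤ).prev i) i b = φ.f i x) →
      ∃ a : K.X ((ComplexShape.up ℤ).prev i), K.d ((ComplexShape.up ℤ).prev i) i a = x) :
    QuasiIsoAt φ i := by
  rw [quasiIsoAt_iff, ShortComplex.quasiIso_iff]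
  exact isIso_homologyMap_of _ hsurj hinj

lemma quasiIsoAt_of_concrete' {K L : Cx k} (φ : K ⟶ L) (p i j : ℤ)
    (hj : (ComplexShape.up ℤ).next i = j) (hp : (ComplexShape.up ℤ).prev i = p)
    (hsurj : ∀ y : L.X i, L.d i j y = 0 →
      ∃ x : K.X i, K.d i j x = 0 ∧ φ.f i x = y)
    (hinj : ∀ x : K.X i, K.d i j x = 0 →
      (∃ b : L.X p, L.d p i b = φ.f i x) →
      ∃ a : K.X p, K.d p i a = x) :
    QuasiIsoAt φ i := by
  subst hj hp
  exact quasiIsoAt_of_concrete φ i hsurj hinj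

end QIso

/-! ### quasi-isomorphism of `piTot` -/

lemma hinj_tot (A : Cx k) (m : ℤ) (x : TotX k A (m+1)) (hdx : dTot A (m+1) x = 0)
    (b : A.X m) (hb : A.d m (m+1) b = (piTot A).f (m+1) x) :
    ∃ a : TotX k A m, dTot A m a = x := by
  set t : TotX k A (m+1) := x - dTot A m (sTot A m b) with ht
  have hd : dTot A (m+1) t = 0 := by
    rw [ht, map_sub, hdx, zero_sub, neg_eq_zero]
    ext i
    exact congrArg (fun u : TotX k A (m+1+1) => u i) (dTot_dTot A m (sTot A m b))
  have hz : (ep k A 0).f (m+1) (t 0) = 0 := by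
    have h1 : (ep k A 0).f (m+1) (t 0) = (piTot A).f (m+1) t := rfl
    erw [h1, ht, map_sub, dTot_sTot, piTot_sTot, hb, sub_self]
    rfl
  obtain ⟨y, hy⟩ := chase_exists A m t hd hz
  refine ⟨y + sTot A m b, ?_⟩
  rw [map_add, hy, ht]
  abel

lemma piTot_quasiIso (A : Cx k) : QuasiIso (piTot A) := by
  refine ⟨fun i => ?_⟩
  obtain ⟨m, rfl⟩ : ∃ m : ℤ, i = m + 1 := ⟨i - 1, by ring⟩
  apply quasiIsoAt_of_concrete' (piTot A) m (m+1) (m+1+1)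
    (CochainComplex.next ℤ (m+1)) (by rw [CochainComplex.prev]; ring)
  · intro y hy
    refine ⟨sTot A (m+1) y, ?_, piTot_sTot A (m+1) y⟩
    show (TotC k A).d (m+1) (m+1+1) (sTot A (m+1) y) = 0
    rw [TotC_d]
    have h2 := dTot_sTot A (m+1) y
    rw [hy, sTot_zero] at h2
    exact h2
  · rintro x hdx ⟨b, hb⟩
    rw [TotC_d] at hdx
    have hgoal : ∃ a : TotX k A m, dTot A m a = x := hinj_tot A m x hdx b hb
    obtain ⟨a, ha⟩ := hgoal
    refine ⟨a, ?_⟩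
    show (TotC k A).d m (m+1) a = x
    rw [TotC_d]
    exact ha

/-! ### projectivity -/

lemma TotC_projective (A : Cx k) (n : ℤ) : Projective ((TotC k A).X n) := by
  show Projective (ModuleCat.of k (TotX k A n))
  haveI : ∀ i : ℕ, Module.Free k ((Pt k A i).X n) :=
    fun i => inferInstanceAs (Module.Free k (Fm k ((Kt k A i).X n)))
  haveI : Module.Projective k (TotX k A n) := inferInstance
  exact (IsProjective.iff_projective _).mp inferInstance

end St5

open CategoryTheory

theorem statement5 (k : Type) [CommRing k] :
    ∃ (P : CochainComplex (ModuleCat.{0} k) ℤ ⥤ CochainComplex (ModuleCat.{0} k) ℤ)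
      (π : P ⟶ 𝟭 (CochainComplex (ModuleCat.{0} k) ℤ))
      (s : ∀ (A : CochainComplex (ModuleCat.{0} k) ℤ) (n : ℤ),
        A.X n → (P.obj A).X n),
      -- each `P(A•)` is a complex of projective `k`-modules
      (∀ (A : CochainComplex (ModuleCat.{0} k) ℤ) (n : ℤ), Projective ((P.obj A).X n)) ∧
      -- `π` is a quasi-isomorphism
      (∀ A : CochainComplex (ModuleCat.{0} k) ℤ, QuasiIso (π.app A)) ∧
      -- `s` preserves zero
      (∀ A n, s A n 0 = 0) ∧
      -- `s` commutes with the differentials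
      (∀ (A : CochainComplex (ModuleCat.{0} k) ℤ) (n : ℤ) (x : A.X n),
        (P.obj A).d n (n + 1) (s A n x) = s A (n + 1) (A.d n (n + 1) x)) ∧
      -- `π ∘ s = id`
      (∀ (A : CochainComplex (ModuleCat.{0} k) ℤ) (n : ℤ) (x : A.X n),
        ((π.app A).f n) (s A n x) = x) ∧
      -- `s` is natural
      (∀ (A B : CochainComplex (ModuleCat.{0} k) ℤ) (f : A ⟶ B) (n : ℤ) (x : A.X n),
        ((P.map f).f n) (s A n x) = s B n ((f.f n) x)) := by
  refine ⟨St5.Pfun k, St5.piNat k, fun A n a => St5.sTot A n a, ?_, ?_, ?_, ?_, ?_, ?_⟩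
  · intro A n
    exact St5.TotC_projective A n
  · intro A
    exact St5.piTot_quasiIso A
  · intro A n
    exact St5.sTot_zero A n
  · intro A n x
    show (St5.TotC k A).d n (n + 1) (St5.sTot A n x) = St5.sTot A (n+1) (A.d n (n+1) x)
    rw [St5.TotC_d]
    exact St5.dTot_sTot A n x
  · intro A n x
    exact St5.piTot_sTot A n x
  · intro A B f n x
    exact St5.sTot_nat f n x
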